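/- Let R be a ring such that the principal right ideal rR has a serial factorization for every non-zero r ∈ R. Then every finitely generated non-zero right ideal A of R can be generated by two elements, the first of which can be any arbitrarily fixed non-zero element of A; that is, for every non-zero r ∈ A there exists s ∈ A with A = rR + sR. -/

import Mathlib

open MulOpposite

universe u

/-- The product `A·B` of two right ideals of `R` (right ideals are `Rᵐᵒᵖ`-submodules of `R`):
the set of all finite sums of products `a * b` with `a ∈ A`, `b ∈ B`. -/
def rmul {R : Type u} [Ring R] (A B : Submodule Rᵐᵒᵖ R) : Submodule Rᵐᵒᵖ R :=
  Submodule.span Rᵐᵒᵖ {x : R | ∃ a ∈ A, ∃ b ∈ B, x = a * b}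

/-- The product `A₁⋯Aₙ` of a (possibly empty) list of right ideals. -/
def rprod {R : Type u} [Ring R] : List (Submodule Rᵐᵒᵖ R) → Submodule Rᵐᵒᵖ R
  | [] => ⊤
  | [A] => A
  | A :: l => rmul A (rprod l)

/-- A finite family of right ideals is coindependent if `Aᵢ + ⋂_{j ≠ i} Aⱼ = R` for every `i`. -/
def Coindep {R : Type u} [Ring R] {n : ℕ} (A : Fin n → Submodule Rᵐᵒᵖ R) : Prop :=
  ∀ i, A i ⊔ (⨅ j, ⨅ (_ : j ≠ i), A j) = ⊤

/-- A module is uniserial if its submodules are linearly ordered by inclusion. -/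
def IsUniserialMod (S : Type*) [Ring S] (M : Type*) [AddCommGroup M] [Module S M] : Prop :=
  ∀ N P : Submodule S M, N ≤ P ∨ P ≤ N

/-- A right ideal is a two-sided ideal if it is also closed under left multiplication. -/
def IsTwoSidedRid {R : Type u} [Ring R] (A : Submodule Rᵐᵒᵖ R) : Prop :=
  ∀ (r : R), ∀ x ∈ A, r * x ∈ A

/-- A serial factorization of a right ideal `A`: a factorization `A = A₁⋯Aₙ` into proper
right ideals that pairwise commute, form a coindependent family, and are such that every
quotient `R/Aᵢ` is a uniserial right `R`-module. -/
def IsSerialFact {R : Type u} [Ring R] {n : ℕ} (A : Submodule Rᵐᵒᵖ R)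
    (F : Fin n → Submodule Rᵐᵒᵖ R) : Prop :=
  (∀ i, F i ≠ ⊤) ∧ (∀ i j, rmul (F i) (F j) = rmul (F j) (F i)) ∧ Coindep F ∧
    (∀ i, IsUniserialMod Rᵐᵒᵖ (R ⧸ F i)) ∧ A = rprod (List.ofFn F)

/-- A right ideal has a serial factorization if it admits one of some length. -/
def HasSerialFact {R : Type u} [Ring R] (A : Submodule Rᵐᵒᵖ R) : Prop :=
  ∃ (n : ℕ) (F : Fin n → Submodule Rᵐᵒᵖ R), IsSerialFact A F

/-- A right chain ring: its right ideals are linearly ordered by inclusion. -/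
def IsRightChainRing (R : Type u) [Ring R] : Prop :=
  ∀ A B : Submodule Rᵐᵒᵖ R, A ≤ B ∨ B ≤ A

/-- A ring is right duo if every right ideal is a two-sided ideal. -/
def IsRightDuo (R : Type u) [Ring R] : Prop :=
  ∀ A : Submodule Rᵐᵒᵖ R, IsTwoSidedRid A

/-- The principal right ideal `rR`. -/
def rspan {R : Type u} [Ring R] (r : R) : Submodule Rᵐᵒᵖ R :=
  Submodule.span Rᵐᵒᵖ ({r} : Set R)


/-!
Coindependence of the factors `Fᵢ` of `rR = F₁⋯Fₙ` yields Chinese-remainder elements `eᵢ`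
(`eᵢ ∈ Fⱼ` for `j ≠ i`, `1 - eᵢ ∈ Fᵢ`). With the commutation `FᵢFⱼ = FⱼFᵢ` they show that the
product is the intersection `⋂ Fᵢ`, and, once `n ≥ 2`, that every `Fᵢ` is a two-sided ideal.
Since `R/Fᵢ` is uniserial, the finitely generated ideal `A` is cyclic modulo `Fᵢ`, say
`A ⊆ aᵢR + Fᵢ`. Then `s = Σ aᵢeᵢ ∈ A` satisfies `A ⊆ sR + Fᵢ` for every `i`, and gluing these
congruences with the `eᵢ` once more gives `A ⊆ sR + ⋂ Fᵢ = sR + rR`.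
-/

open scoped Pointwise

section RightIdeal

variable {R : Type u} [Ring R]

theorem mul_mem_rid {A : Submodule Rᵐᵒᵖ R} {x : R} (hx : x ∈ A) (t : R) : x * t ∈ A :=
  A.smul_mem (op t) hx

theorem mem_rspan_iff {r x : R} : x ∈ rspan r ↔ ∃ t : R, r * t = x := by
  simp only [rspan, Submodule.mem_span_singleton, MulOpposite.exists, op_smul_eq_mul]

theorem rspan_le_iff {r : R} {A : Submodule Rᵐᵒᵖ R} : rspan r ≤ A ↔ r ∈ A :=
  Submodule.span_singleton_le_iff_mem r A

theorem mul_mem_rmul {A B : Submodule Rᵐᵒᵖ R} {a b : R} (ha : a ∈ A) (hb : b ∈ B) :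
    a * b ∈ rmul A B :=
  Submodule.subset_span ⟨a, ha, b, hb, rfl⟩

theorem rmul_le_left (A B : Submodule Rᵐᵒᵖ R) : rmul A B ≤ A :=
  Submodule.span_le.2 <| by rintro _ ⟨a, ha, b, -, rfl⟩; exact mul_mem_rid ha b

-- The monoid `AddSubmonoid R` then supplies associativity and commutation rules for `rmul`.
theorem toAddSubmonoid_rmul (A B : Submodule Rᵐᵒᵖ R) :
    (rmul A B).toAddSubmonoid = A.toAddSubmonoid * B.toAddSubmonoid := by
  rw [rmul, Submodule.span_eq_closure, AddSubmonoid.mul_eq_closure_mul_set]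
  refine le_antisymm (AddSubmonoid.closure_mono ?_) (AddSubmonoid.closure_mono ?_)
  · rintro _ ⟨t, -, _, ⟨a, ha, b, hb, rfl⟩, rfl⟩
    exact ⟨a, ha, b * t.unop, mul_mem_rid hb _, by simp [mul_assoc]⟩
  · rintro _ ⟨a, ha, b, hb, rfl⟩
    exact ⟨1, Set.mem_univ _, a * b, ⟨a, ha, b, hb, rfl⟩, one_smul _ _⟩

theorem toAddSubmonoid_rprod :
    ∀ l : List (Submodule Rᵐᵒᵖ R), l ≠ [] →
      (rprod l).toAddSubmonoid = (l.map Submodule.toAddSubmonoid).prod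
  | [A], _ => by simp [rprod]
  | A :: B :: l, _ => by
    change (rmul A (rprod (B :: l))).toAddSubmonoid = _
    rw [toAddSubmonoid_rmul, toAddSubmonoid_rprod (B :: l) (List.cons_ne_nil _ _)]
    rfl

theorem rprod_cons {A : Submodule Rᵐᵒᵖ R} {l : List (Submodule Rᵐᵒᵖ R)}
    (hl : l ≠ []) : rprod (A :: l) = rmul A (rprod l) := by
  obtain ⟨B, l, rfl⟩ := List.exists_cons_of_ne_nil hl
  rfl

theorem rmul_rprod_comm {B : Submodule Rᵐᵒᵖ R} {l : List (Submodule Rᵐᵒᵖ R)}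
    (hl : l ≠ []) (hcomm : ∀ C ∈ l, rmul B C = rmul C B) :
    rmul B (rprod l) = rmul (rprod l) B := by
  refine Submodule.toAddSubmonoid_injective ?_
  simp only [toAddSubmonoid_rmul, toAddSubmonoid_rprod l hl]
  refine Commute.list_prod_right _ _ fun _ hmem => ?_
  obtain ⟨C, hC, rfl⟩ := List.mem_map.1 hmem
  exact (toAddSubmonoid_rmul B C).symm.trans
    ((congrArg _ (hcomm C hC)).trans (toAddSubmonoid_rmul C B))

theorem rmul_eq_inf_of_sup_eq_top {A B : Submodule Rᵐᵒᵖ R} (hcomm : rmul A B = rmul B A)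
    (hsup : A ⊔ B = ⊤) : rmul A B = A ⊓ B := by
  refine le_antisymm (le_inf (rmul_le_left A B) (hcomm ▸ rmul_le_left B A)) fun x hx => ?_
  obtain ⟨a, ha, b, hb, hab⟩ :=
    Submodule.mem_sup.1 (hsup ▸ Submodule.mem_top : (1 : R) ∈ A ⊔ B)
  have hx' : x = a * x + b * x := by rw [← add_mul, hab, one_mul]
  rw [hx']
  exact add_mem (mul_mem_rmul ha hx.2) (hcomm ▸ mul_mem_rmul hb hx.1)

end RightIdeal

theorem Submodule.sum_sub_mem {S M ι : Type*} [Ring S] [AddCommGroup M] [Module S M]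
    [Fintype ι] [DecidableEq ι] {P : Submodule S M} {t : ι → M} {y : M} (i : ι)
    (hi : t i - y ∈ P) (hne : ∀ j ≠ i, t j ∈ P) : ∑ j, t j - y ∈ P := by
  rw [← Finset.add_sum_erase _ _ (Finset.mem_univ i), add_sub_right_comm]
  exact add_mem hi (Submodule.sum_mem _ fun j hj => hne j (Finset.ne_of_mem_erase hj))

theorem iInf_fin_succ {α : Type*} [CompleteLattice α] {n : ℕ} (f : Fin (n + 1) → α) :
    ⨅ i, f i = f 0 ⊓ ⨅ i : Fin n, f i.succ :=
  le_antisymm (le_inf (iInf_le f 0) (le_iInf fun i => iInf_le f i.succ))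
    (le_iInf (Fin.cases inf_le_left fun i => inf_le_right.trans (iInf_le _ i)))

section Coindep

variable {R : Type u} [Ring R] {n : ℕ} {F : Fin n → Submodule Rᵐᵒᵖ R}

theorem Coindep.exists_partition (hF : Coindep F) :
    ∃ e : Fin n → R, ∀ i, 1 - e i ∈ F i ∧ ∀ j ≠ i, e i ∈ F j := by
  have h1 (i : Fin n) : (1 : R) ∈ F i ⊔ ⨅ j, ⨅ (_ : j ≠ i), F j :=
    hF i ▸ Submodule.mem_top
  choose b hb e he hbe using fun i => Submodule.mem_sup.1 (h1 i)
  refine ⟨e, fun i => ⟨?_, fun j hj => ?_⟩⟩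
  · rw [← hbe i, add_sub_cancel_right]
    exact hb i
  · exact (Submodule.mem_iInf _).1 ((Submodule.mem_iInf _).1 (he i) j) hj

theorem Coindep.tail {F : Fin (n + 1) → Submodule Rᵐᵒᵖ R} (hF : Coindep F) :
    Coindep fun i : Fin n => F i.succ := by
  intro i
  refine eq_top_iff.2 ((hF i.succ).ge.trans (sup_le_sup_left ?_ _))
  exact le_iInf₂ fun j hj => iInf₂_le j.succ fun h => hj (Fin.succ_injective n h)

theorem Coindep.sup_iInf_succ_eq_top {F : Fin (n + 1) → Submodule Rᵐᵒᵖ R} (hF : Coindep F) :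
    F 0 ⊔ ⨅ i : Fin n, F i.succ = ⊤ := by
  refine eq_top_iff.2 ((hF 0).ge.trans (sup_le_sup_left ?_ _))
  exact le_iInf fun i => iInf₂_le i.succ i.succ_ne_zero

theorem rprod_ofFn_eq_iInf : ∀ {n : ℕ} {F : Fin n → Submodule Rᵐᵒᵖ R},
    (∀ i j, rmul (F i) (F j) = rmul (F j) (F i)) → Coindep F →
      rprod (List.ofFn F) = ⨅ i, F i
  | 0, F, _, _ => by simp [rprod, iInf_of_empty]
  | 1, F, _, _ => by simp [rprod]
  | n + 2, F, hcomm, hF => by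
    have hne : List.ofFn (fun i : Fin (n + 1) => F i.succ) ≠ [] := by simp
    rw [List.ofFn_succ, iInf_fin_succ, ← rprod_ofFn_eq_iInf (fun i j => hcomm _ _) hF.tail,
      rprod_cons hne]
    refine rmul_eq_inf_of_sup_eq_top (rmul_rprod_comm hne ?_) ?_
    · simp only [List.mem_ofFn, forall_exists_index]
      rintro _ i rfl
      exact hcomm 0 i.succ
    · rw [rprod_ofFn_eq_iInf (fun i j => hcomm _ _) hF.tail]
      exact hF.sup_iInf_succ_eq_top

theorem Coindep.isTwoSidedRid (hF : Coindep F)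
    (hcomm : ∀ i j, rmul (F i) (F j) = rmul (F j) (F i)) {i j : Fin n} (hji : j ≠ i) :
    IsTwoSidedRid (F i) := by
  intro c x hx
  obtain ⟨e, he⟩ := hF.exists_partition
  have hx' : c * x = (1 - e i) * (c * x) + e i * c * x := by noncomm_ring
  rw [hx']
  refine add_mem (mul_mem_rid (he i).1 _) ?_
  have : e i * c * x ∈ rmul (F j) (F i) := mul_mem_rmul (mul_mem_rid ((he i).2 j hji) c) hx
  exact rmul_le_left _ _ (hcomm j i ▸ this)

theorem Coindep.exists_sub_mem (hF : Coindep F) (y : Fin n → R) :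
    ∃ z : R, ∀ i, z - y i ∈ F i := by
  obtain ⟨e, he⟩ := hF.exists_partition
  refine ⟨∑ j, e j * y j, fun i => Submodule.sum_sub_mem i ?_
    fun j hj => mul_mem_rid ((he j).2 i hj.symm) _⟩
  rw [← neg_mem_iff, neg_sub, ← one_sub_mul]
  exact mul_mem_rid (he i).1 _

theorem Coindep.exists_mem_sub_mem (hF : Coindep F) (hts : ∀ i, IsTwoSidedRid (F i))
    {A : Submodule Rᵐᵒᵖ R} {a : Fin n → R} (ha : ∀ i, a i ∈ A) :
    ∃ s ∈ A, ∀ i, s - a i ∈ F i := by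
  obtain ⟨e, he⟩ := hF.exists_partition
  refine ⟨∑ j, a j * e j, A.sum_mem fun j _ => mul_mem_rid (ha j) _,
    fun i => Submodule.sum_sub_mem i ?_ fun j hj => hts i (a j) _ ((he j).2 i hj.symm)⟩
  rw [← neg_mem_iff, neg_sub, ← mul_one_sub]
  exact hts i (a i) _ (he i).1

theorem Coindep.mem_rspan_sup_iInf (hF : Coindep F) (hts : ∀ i, IsTwoSidedRid (F i))
    {s x : R} (hx : ∀ i, x ∈ rspan s ⊔ F i) : x ∈ rspan s ⊔ ⨅ i, F i := by
  have hdecomp (i : Fin n) : ∃ t : R, x - s * t ∈ F i := by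
    obtain ⟨y, hy, c, hc, rfl⟩ := Submodule.mem_sup.1 (hx i)
    obtain ⟨t, rfl⟩ := mem_rspan_iff.1 hy
    exact ⟨t, by simpa using hc⟩
  choose t ht using hdecomp
  obtain ⟨z, hz⟩ := hF.exists_sub_mem t
  have hxz : x - s * z ∈ ⨅ i, F i := by
    refine (Submodule.mem_iInf _).2 fun i => ?_
    have : x - s * z = (x - s * t i) - s * (z - t i) := by noncomm_ring
    exact this ▸ sub_mem (ht i) (hts i s _ (hz i))
  exact Submodule.mem_sup.2 ⟨s * z, mem_rspan_iff.2 ⟨z, rfl⟩, _, hxz, add_sub_cancel _ _⟩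

end Coindep

section Uniserial

variable {S M : Type*} [Ring S] [AddCommGroup M] [Module S M] {B : Submodule S M}

theorem IsUniserialMod.sup_le_total (hu : IsUniserialMod S (M ⧸ B)) (P Q : Submodule S M) :
    B ⊔ P ≤ B ⊔ Q ∨ B ⊔ Q ≤ B ⊔ P := by
  simpa only [← Submodule.comap_map_mkQ] using
    (hu (P.map B.mkQ) (Q.map B.mkQ)).imp (Submodule.comap_mono ·) (Submodule.comap_mono ·)

theorem IsUniserialMod.exists_sup_eq_sup_span (hu : IsUniserialMod S (M ⧸ B))
    {A : Submodule S M} (hA : A.FG) : ∃ a ∈ A, B ⊔ A = B ⊔ S ∙ a := by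
  induction A, hA using Submodule.fg_induction with
  | singleton x => exact ⟨x, Submodule.mem_span_singleton_self x, rfl⟩
  | sup N₁ N₂ _ _ ih₁ ih₂ =>
    obtain ⟨a₁, ha₁, h₁⟩ := ih₁
    obtain ⟨a₂, ha₂, h₂⟩ := ih₂
    have hsup : B ⊔ (N₁ ⊔ N₂) = (B ⊔ S ∙ a₁) ⊔ (B ⊔ S ∙ a₂) := by
      rw [← h₁, ← h₂, sup_sup_distrib_left]
    rcases hu.sup_le_total (S ∙ a₁) (S ∙ a₂) with h | h
    · exact ⟨a₂, Submodule.mem_sup_right ha₂, hsup.trans (sup_eq_right.2 h)⟩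
    · exact ⟨a₁, Submodule.mem_sup_left ha₁, hsup.trans (sup_eq_left.2 h)⟩

end Uniserial

theorem Coindep.exists_le_rspan_sup_iInf {R : Type u} [Ring R] {n : ℕ}
    {F : Fin n → Submodule Rᵐᵒᵖ R} (hF : Coindep F) (hts : ∀ i, IsTwoSidedRid (F i))
    (hu : ∀ i, IsUniserialMod Rᵐᵒᵖ (R ⧸ F i)) {A : Submodule Rᵐᵒᵖ R} (hA : A.FG) :
    ∃ s ∈ A, A ≤ rspan s ⊔ ⨅ i, F i := by
  choose a haA ha using fun i => (hu i).exists_sup_eq_sup_span hA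
  obtain ⟨s, hsA, hs⟩ := hF.exists_mem_sub_mem hts haA
  refine ⟨s, hsA, fun x hx => hF.mem_rspan_sup_iInf hts fun i => ?_⟩
  have hai : a i ∈ rspan s ⊔ F i := sub_sub_cancel s (a i) ▸
    sub_mem (Submodule.mem_sup_left (rspan_le_iff.1 le_rfl)) (Submodule.mem_sup_right (hs i))
  have hle : F i ⊔ A ≤ rspan s ⊔ F i := by
    rw [ha i]
    exact sup_le le_sup_right (rspan_le_iff.2 hai)
  exact hle (Submodule.mem_sup_right hx)

theorem statement15_general {R : Type u} [Ring R]
    (h : ∀ r : R, r ≠ 0 → HasSerialFact (rspan r)) :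
    ∀ A : Submodule Rᵐᵒᵖ R, A.FG → A ≠ ⊥ →
      ∀ r ∈ A, r ≠ (0 : R) → ∃ s ∈ A, A = rspan r ⊔ rspan s := by
  intro A hA _ r hrA hr
  obtain ⟨n, F, -, hcomm, hF, hu, hr_eq⟩ := h r hr
  rw [rprod_ofFn_eq_iInf hcomm hF] at hr_eq
  obtain ⟨s, hsA, hAs⟩ : ∃ s ∈ A, A ≤ rspan s ⊔ ⨅ i, F i := by
    obtain rfl | rfl | hn : n = 0 ∨ n = 1 ∨ 2 ≤ n := by omega
    · exact ⟨0, A.zero_mem, by simp [iInf_of_empty]⟩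
    · obtain ⟨a, haA, ha⟩ := (hu 0).exists_sup_eq_sup_span hA
      refine ⟨a, haA, ?_⟩
      rw [iInf_unique, sup_comm]
      exact le_sup_right.trans ha.le
    · have := Fin.nontrivial_iff_two_le.2 hn
      exact hF.exists_le_rspan_sup_iInf (fun i => hF.isTwoSidedRid hcomm (exists_ne i).choose_spec)
        hu hA
  refine ⟨s, hsA, le_antisymm ?_ (sup_le (rspan_le_iff.2 hrA) (rspan_le_iff.2 hsA))⟩
  rwa [hr_eq, sup_comm]

/-- Corollary 3.6: if `rR` has a serial factorization for every non-zero `r ∈ R`, then every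
finitely generated non-zero right ideal `A` can be generated by two elements, the first of
which can be any arbitrarily fixed non-zero element of `A`. -/
theorem statement15 {R : Type u} [Ring R] [Nontrivial R]
    (h : ∀ r : R, r ≠ 0 → HasSerialFact (rspan r)) :
    ∀ A : Submodule Rᵐᵒᵖ R, A.FG → A ≠ ⊥ →
      ∀ r ∈ A, r ≠ (0 : R) → ∃ s ∈ A, A = rspan r ⊔ rspan s :=
  statement15_general h
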